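/- The Hölder exponent log γ / log(1/2) of the Takagi-type function T is sharp: for x_n = 0 and y_n = 2^{-n}, one has |T(x_n) - T(y_n)| ≥ c · |x_n - y_n|^{log γ / log(1/2)} for some constant c > 0 independent of n. -/

import Mathlib

open Set

noncomputable section

/-- Distance to the nearest integer. -/
def Phi (y : ℝ) : ℝ := |y - round y|

/-- The Takagi-type function with roughness parameter `γ`. -/
def Tak (γ : ℝ) (x : ℝ) : ℝ := ∑' n : ℕ, γ ^ n * Phi (2 ^ n * x)

/-! All terms of the series are nonnegative, so `Tak γ (2⁻ⁿ⁻¹)` is at least its `n`-th term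
`γ ^ n * Phi (1/2) = γ ^ n / 2`, while `|2⁻ⁿ⁻¹| ^ (log γ / log (1/2)) = γ ^ (n + 1)`. -/

lemma Phi_nonneg (y : ℝ) : 0 ≤ Phi y := abs_nonneg _

lemma Phi_le_half (y : ℝ) : Phi y ≤ 1 / 2 := abs_sub_round y

lemma Phi_half : Phi (1 / 2) = 1 / 2 := by
  norm_num [Phi, round_eq]

lemma Tak_zero (γ : ℝ) : Tak γ 0 = 0 := by
  simp [Tak, Phi]

lemma summable_Tak {γ : ℝ} (hγ0 : 0 ≤ γ) (hγ1 : γ < 1) (x : ℝ) :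
    Summable fun n : ℕ => γ ^ n * Phi (2 ^ n * x) :=
  ((summable_geometric_of_lt_one hγ0 hγ1).mul_right (1 / 2)).of_nonneg_of_le
    (fun n => mul_nonneg (pow_nonneg hγ0 n) (Phi_nonneg _))
    (fun n => mul_le_mul_of_nonneg_left (Phi_le_half _) (pow_nonneg hγ0 n))

lemma term_le_Tak {γ : ℝ} (hγ0 : 0 ≤ γ) (hγ1 : γ < 1) (x : ℝ) (k : ℕ) :
    γ ^ k * Phi (2 ^ k * x) ≤ Tak γ x :=
  (summable_Tak hγ0 hγ1 x).le_tsum k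
    fun n _ => mul_nonneg (pow_nonneg hγ0 n) (Phi_nonneg _)

lemma pow_div_two_le_Tak_half_pow {γ : ℝ} (hγ0 : 0 ≤ γ) (hγ1 : γ < 1) (n : ℕ) :
    γ ^ n / 2 ≤ Tak γ ((1 / 2) ^ (n + 1)) := by
  have hpoint : (2 : ℝ) ^ n * (1 / 2) ^ (n + 1) = 1 / 2 := by
    rw [pow_succ, ← mul_assoc, ← mul_pow]
    norm_num
  calc γ ^ n / 2 = γ ^ n * Phi (2 ^ n * (1 / 2) ^ (n + 1)) := by rw [hpoint, Phi_half]; ring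
    _ ≤ Tak γ ((1 / 2) ^ (n + 1)) := term_le_Tak hγ0 hγ1 _ n

lemma pow_rpow_logb {a b : ℝ} (ha0 : 0 < a) (ha1 : a ≠ 1) (hb : 0 < b) (n : ℕ) :
    (a ^ n) ^ Real.logb a b = b ^ n := by
  rw [← Real.rpow_pow_comm ha0.le, Real.rpow_logb ha0 ha1 hb]

/-- Sharpness of the Hölder exponent `log γ / log (1/2)` along `x_n = 0`, `y_n = 2^{-n}`. -/
theorem stmt1 (γ : ℝ) (hγ : γ ∈ Set.Ioo (1/2 : ℝ) 1) :
    ∃ c : ℝ, 0 < c ∧ ∀ n : ℕ, 1 ≤ n →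
      c * |(0 : ℝ) - (1/2 : ℝ) ^ n| ^ (Real.log γ / Real.log (1/2))
        ≤ |Tak γ 0 - Tak γ ((1/2 : ℝ) ^ n)| := by
  obtain ⟨hγ_half, hγ1⟩ := hγ
  have hγ0 : 0 < γ := by linarith
  refine ⟨1 / (2 * γ), by positivity, fun n hn => ?_⟩
  obtain ⟨m, rfl⟩ := Nat.exists_eq_add_of_le' hn
  have hrpow : |(0 : ℝ) - (1 / 2) ^ (m + 1)| ^ (Real.log γ / Real.log (1 / 2)) = γ ^ (m + 1) := by
    rw [zero_sub, abs_neg, abs_of_pos (by positivity), ← Real.logb,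
      pow_rpow_logb (by norm_num) (by norm_num) hγ0]
  have hTak := pow_div_two_le_Tak_half_pow hγ0.le hγ1 m
  have hTak_nonneg : 0 ≤ Tak γ ((1 / 2) ^ (m + 1)) := (by positivity : (0 : ℝ) ≤ γ ^ m / 2).trans hTak
  rw [hrpow, Tak_zero, zero_sub, abs_neg, abs_of_nonneg hTak_nonneg]
  calc 1 / (2 * γ) * γ ^ (m + 1) = γ ^ m / 2 := by field_simp; ring
    _ ≤ Tak γ ((1 / 2) ^ (m + 1)) := hTak
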